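/- arXiv:math/0501129 — 8 statements merged into one kernel-verified Lean document; each statement's English description precedes it below -/
import Mathlib

section
/- Let H be an inner product space over ℝ or ℂ and x, y ∈ H \ {0}. Then ‖x‖‖y‖ − Re⟨x,y⟩ ≤ 2‖x‖‖y‖ (‖x−y‖/(‖x‖+‖y‖))². -/
/-! With `a = ‖x‖`, `b = ‖y‖`, `r = Re⟨x, y⟩` we have `‖x - y‖² = a² - 2r + b²`, and the claim
cleared of denominators follows from the identity
`2ab(a² - 2r + b²) - (ab - r)(a + b)² = (a - b)²(ab + r)`,
whose right side is nonnegative by Cauchy–Schwarz. -/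

lemma mul_sub_le_two_mul_mul_div_add_sq {a b r d : ℝ} (ha : 0 ≤ a) (hb : 0 ≤ b)
    (hr : -(a * b) ≤ r) (hd : d ^ 2 = a ^ 2 - 2 * r + b ^ 2) :
    a * b - r ≤ 2 * (a * b) * (d / (a + b)) ^ 2 := by
  rcases (add_nonneg ha hb).eq_or_lt with hab | hab
  · obtain rfl : a = 0 := by linarith
    simp only [zero_mul, neg_zero] at hr ⊢
    linarith
  · rw [div_pow, ← mul_div_assoc, le_div_iff₀ (by positivity), hd]
    have key : 2 * (a * b) * (a ^ 2 - 2 * r + b ^ 2) - (a * b - r) * (a + b) ^ 2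
        = (a - b) ^ 2 * (a * b + r) := by ring
    linarith [mul_nonneg (sq_nonneg (a - b)) (neg_le_iff_add_nonneg.mp hr)]

theorem stmt1_general {𝕜 : Type*} [RCLike 𝕜] {H : Type*} [NormedAddCommGroup H]
    [InnerProductSpace 𝕜 H] (x y : H) :
    ‖x‖ * ‖y‖ - RCLike.re (inner 𝕜 x y : 𝕜) ≤
      2 * (‖x‖ * ‖y‖) * (‖x - y‖ / (‖x‖ + ‖y‖)) ^ 2 :=
  mul_sub_le_two_mul_mul_div_add_sq (norm_nonneg x) (norm_nonneg y)
    (abs_le.mp ((RCLike.abs_re_le_norm _).trans (norm_inner_le_norm x y))).1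
    (norm_sub_sq (𝕜 := 𝕜) x y)

theorem stmt1 {𝕜 : Type*} [RCLike 𝕜] {H : Type*} [NormedAddCommGroup H]
    [InnerProductSpace 𝕜 H] (x y : H) (hx : x ≠ 0) (hy : y ≠ 0) :
    ‖x‖ * ‖y‖ - RCLike.re (inner 𝕜 x y : 𝕜) ≤
      2 * (‖x‖ * ‖y‖) * (‖x - y‖ / (‖x‖ + ‖y‖)) ^ 2 :=
  stmt1_general x y
end

section
/- Let H be an inner product space over ℝ or ℂ, x, y ∈ H \ {0} and ρ > 0 such that ‖x/‖y‖ − y/‖x‖‖ ≤ ρ. Then ‖x‖‖y‖ − Re⟨x,y⟩ ≤ (1/2) ρ² ‖x‖‖y‖. -/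
/-!
The vectors `u = x / ‖y‖` and `v = y / ‖x‖` satisfy `‖u‖ * ‖v‖ = 1`, so expanding
`‖u - v‖²` and using `‖u‖² + ‖v‖² ≥ 2 ‖u‖ ‖v‖` gives `‖u - v‖² ≥ 2 (1 - Re ⟪u, v⟫)`,
and `1 - Re ⟪u, v⟫ = (‖x‖ ‖y‖ - Re ⟪x, y⟫) / (‖x‖ ‖y‖)`.
-/

open RCLike
open scoped InnerProductSpace

section
variable {𝕜 E : Type*} [RCLike 𝕜] [NormedAddCommGroup E] [InnerProductSpace 𝕜 E]

theorem two_mul_norm_mul_norm_sub_re_inner_le_norm_sub_sq (u v : E) :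
    2 * (‖u‖ * ‖v‖ - re ⟪u, v⟫_𝕜) ≤ ‖u - v‖ ^ 2 := by
  rw [@norm_sub_sq 𝕜]
  nlinarith [sq_nonneg (‖u‖ - ‖v‖)]

theorem norm_ofReal_smul_mul_norm_ofReal_smul_sub_re_inner {r s : ℝ} (hr : 0 ≤ r) (hs : 0 ≤ s)
    (u v : E) :
    ‖(r : 𝕜) • u‖ * ‖(s : 𝕜) • v‖ - re ⟪(r : 𝕜) • u, (s : 𝕜) • v⟫_𝕜
      = r * s * (‖u‖ * ‖v‖ - re ⟪u, v⟫_𝕜) := by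
  simp only [norm_smul, norm_ofReal, abs_of_nonneg hr, abs_of_nonneg hs, inner_smul_real_left,
    inner_smul_real_right, smul_re]
  ring

end

theorem stmt2_general {𝕜 : Type*} [RCLike 𝕜] {H : Type*} [NormedAddCommGroup H]
    [InnerProductSpace 𝕜 H] (x y : H) (hx : x ≠ 0) (hy : y ≠ 0) (ρ : ℝ)
    (h : ‖((‖y‖ : 𝕜)⁻¹ • x) - (‖x‖ : 𝕜)⁻¹ • y‖ ≤ ρ) :
    ‖x‖ * ‖y‖ - RCLike.re (inner 𝕜 x y : 𝕜) ≤ (1 / 2) * ρ ^ 2 * (‖x‖ * ‖y‖) := by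
  have hxy : 0 < ‖x‖ * ‖y‖ := mul_pos (norm_pos_iff.mpr hx) (norm_pos_iff.mpr hy)
  rw [← ofReal_inv, ← ofReal_inv] at h
  have key := (two_mul_norm_mul_norm_sub_re_inner_le_norm_sub_sq (𝕜 := 𝕜) _ _).trans
    (pow_le_pow_left₀ (norm_nonneg _) h 2)
  rw [norm_ofReal_smul_mul_norm_ofReal_smul_sub_re_inner (inv_nonneg.mpr (norm_nonneg y))
    (inv_nonneg.mpr (norm_nonneg x))] at key
  calc ‖x‖ * ‖y‖ - re ⟪x, y⟫_𝕜
      = ‖y‖⁻¹ * ‖x‖⁻¹ * (‖x‖ * ‖y‖ - re ⟪x, y⟫_𝕜) * (‖x‖ * ‖y‖) := by field_simp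
    _ ≤ (1 / 2) * ρ ^ 2 * (‖x‖ * ‖y‖) := mul_le_mul_of_nonneg_right (by linarith) hxy.le

theorem stmt2 {𝕜 : Type*} [RCLike 𝕜] {H : Type*} [NormedAddCommGroup H]
    [InnerProductSpace 𝕜 H] (x y : H) (hx : x ≠ 0) (hy : y ≠ 0) (ρ : ℝ) (hρ : 0 < ρ)
    (h : ‖((‖y‖ : 𝕜)⁻¹ • x) - (‖x‖ : 𝕜)⁻¹ • y‖ ≤ ρ) :
    ‖x‖ * ‖y‖ - RCLike.re (inner 𝕜 x y : 𝕜) ≤ (1 / 2) * ρ ^ 2 * (‖x‖ * ‖y‖) :=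
  stmt2_general x y hx hy ρ h
end

section
/- Let H be a real or complex inner product space, x, y ∈ H \ {0} with ‖x‖ ≥ ‖y‖, and r ≥ 1. Then ‖x‖‖y‖ − Re⟨x,y⟩ ≤ (1/2) r² (‖x‖/‖y‖)^{r−1} ‖x−y‖². -/
/-! The left side is at most `‖x - y‖² / 2` by expanding the square and using
`2‖x‖‖y‖ ≤ ‖x‖² + ‖y‖²`; the extra factor `r² (‖x‖/‖y‖)^(r-1)` is at least `1`. -/

theorem norm_mul_norm_sub_re_inner_le {𝕜 : Type*} [RCLike 𝕜] {H : Type*}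
    [NormedAddCommGroup H] [InnerProductSpace 𝕜 H] (x y : H) :
    ‖x‖ * ‖y‖ - RCLike.re (inner 𝕜 x y : 𝕜) ≤ (1 / 2) * ‖x - y‖ ^ 2 := by
  rw [@norm_sub_sq 𝕜]
  nlinarith [two_mul_le_add_sq ‖x‖ ‖y‖]

theorem one_le_sq_mul_rpow_sub_one {r t : ℝ} (hr : 1 ≤ r) (ht : 1 ≤ t) :
    1 ≤ r ^ 2 * t ^ (r - 1) :=
  one_le_mul_of_one_le_of_one_le (one_le_pow₀ hr) (Real.one_le_rpow ht (by linarith))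

theorem stmt4_general {𝕜 : Type*} [RCLike 𝕜] {H : Type*} [NormedAddCommGroup H]
    [InnerProductSpace 𝕜 H] (x y : H) (hy : y ≠ 0) (hxy : ‖y‖ ≤ ‖x‖)
    (r : ℝ) (hr : 1 ≤ r) :
    ‖x‖ * ‖y‖ - RCLike.re (inner 𝕜 x y : 𝕜) ≤
      (1 / 2) * r ^ 2 * (‖x‖ / ‖y‖) ^ (r - 1) * ‖x - y‖ ^ 2 := by
  have hratio : 1 ≤ ‖x‖ / ‖y‖ := (one_le_div (norm_pos_iff.mpr hy)).mpr hxy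
  have hfactor := one_le_sq_mul_rpow_sub_one hr hratio
  calc ‖x‖ * ‖y‖ - RCLike.re (inner 𝕜 x y : 𝕜) ≤ (1 / 2) * ‖x - y‖ ^ 2 :=
        norm_mul_norm_sub_re_inner_le x y
    _ ≤ (1 / 2) * (r ^ 2 * (‖x‖ / ‖y‖) ^ (r - 1)) * ‖x - y‖ ^ 2 := by
        nlinarith [sq_nonneg ‖x - y‖]
    _ = (1 / 2) * r ^ 2 * (‖x‖ / ‖y‖) ^ (r - 1) * ‖x - y‖ ^ 2 := by ring

theorem stmt4 {𝕜 : Type*} [RCLike 𝕜] {H : Type*} [NormedAddCommGroup H]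
    [InnerProductSpace 𝕜 H] (x y : H) (hx : x ≠ 0) (hy : y ≠ 0) (hxy : ‖y‖ ≤ ‖x‖)
    (r : ℝ) (hr : 1 ≤ r) :
    ‖x‖ * ‖y‖ - RCLike.re (inner 𝕜 x y : 𝕜) ≤
      (1 / 2) * r ^ 2 * (‖x‖ / ‖y‖) ^ (r - 1) * ‖x - y‖ ^ 2 :=
  stmt4_general x y hy hxy r hr
end

section
/- Let H be a real or complex inner product space, x, y ∈ H \ {0} with ‖x‖ ≥ ‖y‖, and r < 1. Then ‖x‖‖y‖ − Re⟨x,y⟩ ≤ (1/2) (‖x‖/‖y‖)^{1−r} ‖x−y‖². -/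
/- Expanding the square gives `‖x - y‖² = (‖x‖ - ‖y‖)² + 2 (‖x‖‖y‖ - Re⟪x, y⟫)`, so
`‖x‖‖y‖ - Re⟪x, y⟫ ≤ ½ ‖x - y‖²` in any inner product space; the factor `(‖x‖/‖y‖)^(1-r)` is
at least `1` when `‖y‖ ≤ ‖x‖` and `r < 1`, so it only weakens this bound. -/

theorem norm_mul_norm_sub_re_inner_le_half_norm_sub_sq {𝕜 H : Type*} [RCLike 𝕜]
    [NormedAddCommGroup H] [InnerProductSpace 𝕜 H] (x y : H) :
    ‖x‖ * ‖y‖ - RCLike.re (inner 𝕜 x y : 𝕜) ≤ 1 / 2 * ‖x - y‖ ^ 2 := by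
  rw [@norm_sub_sq 𝕜]
  nlinarith [sq_nonneg (‖x‖ - ‖y‖)]

theorem stmt5_general {𝕜 : Type*} [RCLike 𝕜] {H : Type*} [NormedAddCommGroup H]
    [InnerProductSpace 𝕜 H] (x y : H) (hy : y ≠ 0) (hxy : ‖y‖ ≤ ‖x‖)
    (r : ℝ) (hr : r < 1) :
    ‖x‖ * ‖y‖ - RCLike.re (inner 𝕜 x y : 𝕜) ≤
      (1 / 2) * (‖x‖ / ‖y‖) ^ (1 - r) * ‖x - y‖ ^ 2 := by
  have one_le_factor : 1 ≤ (‖x‖ / ‖y‖) ^ (1 - r) :=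
    Real.one_le_rpow ((one_le_div (norm_pos_iff.mpr hy)).mpr hxy) (by linarith)
  calc ‖x‖ * ‖y‖ - RCLike.re (inner 𝕜 x y : 𝕜) ≤ 1 / 2 * ‖x - y‖ ^ 2 :=
        norm_mul_norm_sub_re_inner_le_half_norm_sub_sq x y
    _ ≤ (‖x‖ / ‖y‖) ^ (1 - r) * (1 / 2 * ‖x - y‖ ^ 2) :=
        le_mul_of_one_le_left (by positivity) one_le_factor
    _ = _ := by ring

theorem stmt5 {𝕜 : Type*} [RCLike 𝕜] {H : Type*} [NormedAddCommGroup H]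
    [InnerProductSpace 𝕜 H] (x y : H) (hx : x ≠ 0) (hy : y ≠ 0) (hxy : ‖y‖ ≤ ‖x‖)
    (r : ℝ) (hr : r < 1) :
    ‖x‖ * ‖y‖ - RCLike.re (inner 𝕜 x y : 𝕜) ≤
      (1 / 2) * (‖x‖ / ‖y‖) ^ (1 - r) * ‖x - y‖ ^ 2 :=
  stmt5_general x y hy hxy r hr
end

section
/- Let H be a real or complex inner product space and p ≥ 1. Then for all x, y ∈ H, ‖x‖‖y‖ − Re⟨x,y⟩ ≤ (1/2)·[(‖x‖+‖y‖)^{2p} − ‖x+y‖^{2p}]^{1/p}. -/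
/-!
With `A = (‖x‖ + ‖y‖) ^ 2` and `B = ‖x + y‖ ^ 2` we have `0 ≤ B ≤ A` and
`2 (‖x‖ ‖y‖ - Re ⟪x, y⟫) = A - B`, so the claim is `A - B ≤ (A ^ p - B ^ p) ^ (1 / p)`,
which is the superadditivity `(A - B) ^ p + B ^ p ≤ A ^ p` of `t ↦ t ^ p` for `p ≥ 1`.
-/

open RCLike

theorem Real.sub_le_rpow_sub_rpow_rpow_one_div {p a b : ℝ} (hb : 0 ≤ b) (hba : b ≤ a)
    (hp : 1 ≤ p) : a - b ≤ (a ^ p - b ^ p) ^ (1 / p) := by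
  have hab : 0 ≤ a - b := sub_nonneg.mpr hba
  have hsuper : (a - b) ^ p + b ^ p ≤ a ^ p := by
    simpa using Real.add_rpow_le_rpow_add hab hb hp
  rw [one_div, Real.le_rpow_inv_iff_of_pos hab (by linarith [Real.rpow_nonneg hab p])
    (by linarith)]
  linarith

theorem add_norm_sq_sub_norm_add_sq {𝕜 : Type*} [RCLike 𝕜] {H : Type*} [NormedAddCommGroup H]
    [InnerProductSpace 𝕜 H] (x y : H) :
    (‖x‖ + ‖y‖) ^ 2 - ‖x + y‖ ^ 2 = 2 * (‖x‖ * ‖y‖ - re (inner 𝕜 x y)) := by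
  rw [norm_add_sq (𝕜 := 𝕜)]
  ring

theorem stmt10 {𝕜 : Type*} [RCLike 𝕜] {H : Type*} [NormedAddCommGroup H]
    [InnerProductSpace 𝕜 H] (p : ℝ) (hp : 1 ≤ p) (x y : H) :
    ‖x‖ * ‖y‖ - RCLike.re (inner 𝕜 x y : 𝕜) ≤
      (1 / 2) * ((‖x‖ + ‖y‖) ^ (2 * p) - ‖x + y‖ ^ (2 * p)) ^ (1 / p) := by
  have rpow_two_mul : ∀ {c : ℝ}, 0 ≤ c → c ^ (2 * p) = (c ^ 2) ^ p := fun hc => by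
    rw [Real.rpow_mul hc, Real.rpow_two]
  have hsq : ‖x + y‖ ^ 2 ≤ (‖x‖ + ‖y‖) ^ 2 := by gcongr; exact norm_add_le x y
  have key := Real.sub_le_rpow_sub_rpow_rpow_one_div (sq_nonneg _) hsq hp
  rw [add_norm_sq_sub_norm_add_sq (𝕜 := 𝕜)] at key
  rw [rpow_two_mul (by positivity), rpow_two_mul (norm_nonneg _)]
  linarith
end

section
/- Let H be a real or complex inner product space and p ≥ 1. Then for all x, y ∈ H, ‖x‖‖y‖ − Re⟨x,y⟩ ≤ (1/2)·[‖x−y‖^{2p} − |‖x‖−‖y‖|^{2p}]^{1/p}. -/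
open RCLike in
theorem norm_mul_norm_sub_re_inner {𝕜 : Type*} [RCLike 𝕜] {H : Type*} [NormedAddCommGroup H]
    [InnerProductSpace 𝕜 H] (x y : H) :
    ‖x‖ * ‖y‖ - re (inner 𝕜 x y : 𝕜) = (1 / 2) * (‖x - y‖ ^ 2 - (‖x‖ - ‖y‖) ^ 2) := by
  rw [@norm_sub_sq 𝕜]
  ring

namespace Real

/-- Superadditivity of `t ↦ t ^ p` applied to `a = (a - b) + b`. -/
theorem sub_le_rpow_sub_rpow_rpow_one_div_s11 {p a b : ℝ} (hb : 0 ≤ b) (hba : b ≤ a) (hp : 1 ≤ p) :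
    a - b ≤ (a ^ p - b ^ p) ^ (1 / p) := by
  have hp0 : 0 < p := by linarith
  have hsuper := add_rpow_le_rpow_add (sub_nonneg.2 hba) hb hp
  rw [sub_add_cancel] at hsuper
  rw [one_div, le_rpow_inv_iff_of_pos (sub_nonneg.2 hba) (sub_nonneg.2 (rpow_le_rpow hb hba hp0.le)) hp0]
  linarith

theorem sq_sub_sq_le_rpow_sub_rpow_rpow_one_div {p a b : ℝ} (hb : 0 ≤ b) (hba : b ≤ a)
    (hp : 1 ≤ p) : a ^ 2 - b ^ 2 ≤ (a ^ (2 * p) - b ^ (2 * p)) ^ (1 / p) := by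
  have hsq {t : ℝ} (ht : 0 ≤ t) : t ^ (2 * p) = (t ^ 2) ^ p := by
    exact_mod_cast rpow_natCast_mul ht 2 p
  rw [hsq hb, hsq (hb.trans hba)]
  exact sub_le_rpow_sub_rpow_rpow_one_div_s11 (by positivity) (pow_le_pow_left₀ hb hba 2) hp

end Real

theorem stmt11 {𝕜 : Type*} [RCLike 𝕜] {H : Type*} [NormedAddCommGroup H]
    [InnerProductSpace 𝕜 H] (p : ℝ) (hp : 1 ≤ p) (x y : H) :
    ‖x‖ * ‖y‖ - RCLike.re (inner 𝕜 x y : 𝕜) ≤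
      (1 / 2) * (‖x - y‖ ^ (2 * p) - |‖x‖ - ‖y‖| ^ (2 * p)) ^ (1 / p) := by
  rw [norm_mul_norm_sub_re_inner, ← sq_abs (‖x‖ - ‖y‖)]
  gcongr
  exact Real.sq_sub_sq_le_rpow_sub_rpow_rpow_one_div (abs_nonneg _) (abs_norm_sub_norm_le x y) hp
end

section
/- Let H be a complex inner product space, α, γ > 0, β ∈ ℂ with |β|² ≥ αγ, and x, a ∈ H with a ≠ 0 such that ‖x − (β/α)·a‖ ≤ (√(|β|² − αγ)/α)·‖a‖. Then ‖x‖²‖a‖² − |⟨x,a⟩|² ≤ ((|β|² − αγ)/(αγ))·|⟨x,a⟩|². -/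
/-!
Expanding `‖x - c • a‖²` and bounding `re ⟪x, c • a⟫` by `‖c‖ ‖⟪x, a⟫‖` turns the hypothesis into the
linear bound `‖x‖² + γ ‖a‖² ≤ 2 ‖c‖ ‖⟪x, a⟫‖`, where `c = β / α` and `γ` stands for `γ / α`.
By AM-GM the left side is at least `2 √γ ‖x‖ ‖a‖`, so `γ ‖x‖² ‖a‖² ≤ ‖c‖² ‖⟪x, a⟫‖²`; clearing `α`
gives the claim.
-/

lemma mul_sq_mul_sq_le_sq_of_sq_add_mul_sq_le {γ u v w : ℝ} (hγ : 0 ≤ γ)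
    (h : u ^ 2 + γ * v ^ 2 ≤ 2 * w) : γ * (u ^ 2 * v ^ 2) ≤ w ^ 2 := by
  have hnonneg : 0 ≤ u ^ 2 + γ * v ^ 2 := by positivity
  nlinarith [mul_self_le_mul_self hnonneg h, sq_nonneg (u ^ 2 - γ * v ^ 2)]

section InnerProductSpace

variable {𝕜 E : Type*} [RCLike 𝕜] [NormedAddCommGroup E] [InnerProductSpace 𝕜 E]

lemma sq_norm_add_mul_sq_norm_le_of_norm_sub_smul_sq_le {γ : ℝ} {c : 𝕜} {x a : E}
    (h : ‖x - c • a‖ ^ 2 ≤ (‖c‖ ^ 2 - γ) * ‖a‖ ^ 2) :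
    ‖x‖ ^ 2 + γ * ‖a‖ ^ 2 ≤ 2 * (‖c‖ * ‖inner 𝕜 x a‖) := by
  have hexpand : ‖x - c • a‖ ^ 2 = ‖x‖ ^ 2 - 2 * RCLike.re (inner 𝕜 x (c • a)) + ‖c‖ ^ 2 * ‖a‖ ^ 2 := by
    rw [norm_sub_sq (𝕜 := 𝕜), norm_smul, mul_pow]
  have hre : RCLike.re (inner 𝕜 x (c • a)) ≤ ‖c‖ * ‖inner 𝕜 x a‖ := by
    rw [inner_smul_right, ← norm_mul]
    exact RCLike.re_le_norm _
  nlinarith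

lemma mul_sq_norm_mul_sq_norm_le_of_norm_sub_smul_sq_le {γ : ℝ} (hγ : 0 ≤ γ) {c : 𝕜} {x a : E}
    (h : ‖x - c • a‖ ^ 2 ≤ (‖c‖ ^ 2 - γ) * ‖a‖ ^ 2) :
    γ * (‖x‖ ^ 2 * ‖a‖ ^ 2) ≤ ‖c‖ ^ 2 * ‖inner 𝕜 x a‖ ^ 2 := by
  rw [← mul_pow (‖c‖)]
  exact mul_sq_mul_sq_le_sq_of_sq_add_mul_sq_le hγ
    (sq_norm_add_mul_sq_norm_le_of_norm_sub_smul_sq_le h)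

end InnerProductSpace

theorem stmt17_general {H : Type*} [NormedAddCommGroup H] [InnerProductSpace ℂ H]
    (α γ : ℝ) (hα : 0 < α) (hγ : 0 < γ) (β : ℂ) (hβ : α * γ ≤ ‖β‖ ^ 2)
    (x a : H)
    (h : ‖x - ((β / (α : ℂ)) • a)‖ ≤ (Real.sqrt (‖β‖ ^ 2 - α * γ) / α) * ‖a‖) :
    ‖x‖ ^ 2 * ‖a‖ ^ 2 - ‖(inner ℂ x a : ℂ)‖ ^ 2 ≤
      ((‖β‖ ^ 2 - α * γ) / (α * γ)) * ‖(inner ℂ x a : ℂ)‖ ^ 2 := by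
  have hc : ‖β / (α : ℂ)‖ = ‖β‖ / α := by
    rw [norm_div, Complex.norm_real, Real.norm_of_nonneg hα.le]
  have hsq : ‖x - (β / (α : ℂ)) • a‖ ^ 2 ≤ (‖β / (α : ℂ)‖ ^ 2 - γ / α) * ‖a‖ ^ 2 := by
    calc ‖x - (β / (α : ℂ)) • a‖ ^ 2 ≤ (Real.sqrt (‖β‖ ^ 2 - α * γ) / α * ‖a‖) ^ 2 := by gcongr
      _ = (‖β / (α : ℂ)‖ ^ 2 - γ / α) * ‖a‖ ^ 2 := by
        rw [mul_pow, div_pow, Real.sq_sqrt (by linarith), hc]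
        field_simp
  have key := mul_sq_norm_mul_sq_norm_le_of_norm_sub_smul_sq_le (by positivity) hsq
  rw [hc] at key
  rw [div_mul_eq_mul_div, le_div_iff₀ (by positivity)]
  field_simp at key
  nlinarith

theorem stmt17 {H : Type*} [NormedAddCommGroup H] [InnerProductSpace ℂ H]
    (α γ : ℝ) (hα : 0 < α) (hγ : 0 < γ) (β : ℂ) (hβ : α * γ ≤ ‖β‖ ^ 2)
    (x a : H) (ha : a ≠ 0)
    (h : ‖x - ((β / (α : ℂ)) • a)‖ ≤ (Real.sqrt (‖β‖ ^ 2 - α * γ) / α) * ‖a‖) :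
    ‖x‖ ^ 2 * ‖a‖ ^ 2 - ‖(inner ℂ x a : ℂ)‖ ^ 2 ≤
      ((‖β‖ ^ 2 - α * γ) / (α * γ)) * ‖(inner ℂ x a : ℂ)‖ ^ 2 :=
  stmt17_general α γ hα hγ β hβ x a h
end

section
/- Let H be a real or complex inner product space, e ∈ H with ‖e‖ = 1, and x₁,…,xₙ ∈ H \ {0} with ‖xᵢ/‖xᵢ‖ − e‖ ≤ rᵢ for each i. Then ∑ᵢ ‖xᵢ‖ − ‖∑ᵢ xᵢ‖ ≤ (1/2) ∑ᵢ rᵢ² ‖xᵢ‖. -/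
/-!
For a unit vector `e`, the defect `‖x‖ - Re ⟪x, e⟫` equals `½ ‖x‖ ‖x / ‖x‖ - e‖²`, by expanding the
square. Summing over `i` and using `Re ⟪∑ xᵢ, e⟫ ≤ ‖∑ xᵢ‖` bounds the triangle-inequality defect
`∑ ‖xᵢ‖ - ‖∑ xᵢ‖` by the sum of these per-vector defects.
-/

open Finset RCLike
open scoped InnerProductSpace

section

variable {𝕜 H : Type*} [RCLike 𝕜] [NormedAddCommGroup H] [InnerProductSpace 𝕜 H]

theorem norm_sub_re_inner_eq_half_mul_norm_normalize_sub_sq {e : H} (he : ‖e‖ = 1) (x : H) :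
    ‖x‖ - re ⟪x, e⟫_𝕜 = 1 / 2 * ‖x‖ * ‖(‖x‖ : 𝕜)⁻¹ • x - e‖ ^ 2 := by
  rcases eq_or_ne x 0 with rfl | hx
  · simp
  have hpos : 0 < ‖x‖ := norm_pos_iff.mpr hx
  have hunit : ‖(‖x‖ : 𝕜)⁻¹ • x‖ = 1 := by
    rw [norm_smul, norm_inv, norm_ofReal, abs_of_pos hpos, inv_mul_cancel₀ hpos.ne']
  have hre : re ⟪(‖x‖ : 𝕜)⁻¹ • x, e⟫_𝕜 = ‖x‖⁻¹ * re ⟪x, e⟫_𝕜 := by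
    rw [inner_smul_left, map_inv₀, conj_ofReal, ← ofReal_inv, re_ofReal_mul]
  rw [@norm_sub_sq 𝕜, hunit, he, hre]
  field_simp
  ring

theorem norm_sub_re_inner_le_half_sq_mul_norm {e : H} (he : ‖e‖ = 1) {x : H} {r : ℝ}
    (h : ‖(‖x‖ : 𝕜)⁻¹ • x - e‖ ≤ r) :
    ‖x‖ - re ⟪x, e⟫_𝕜 ≤ 1 / 2 * (r ^ 2 * ‖x‖) := by
  rw [norm_sub_re_inner_eq_half_mul_norm_normalize_sub_sq he]
  have := pow_le_pow_left₀ (norm_nonneg _) h 2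
  nlinarith [norm_nonneg x]

theorem sum_norm_sub_norm_sum_le_sum_norm_sub_re_inner {ι : Type*} (s : Finset ι) {e : H}
    (he : ‖e‖ ≤ 1) (x : ι → H) :
    ∑ i ∈ s, ‖x i‖ - ‖∑ i ∈ s, x i‖ ≤ ∑ i ∈ s, (‖x i‖ - re ⟪x i, e⟫_𝕜) := by
  have hre : re ⟪∑ i ∈ s, x i, e⟫_𝕜 ≤ ‖∑ i ∈ s, x i‖ :=
    calc re ⟪∑ i ∈ s, x i, e⟫_𝕜 ≤ ‖∑ i ∈ s, x i‖ * ‖e‖ := re_inner_le_norm _ _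
      _ ≤ ‖∑ i ∈ s, x i‖ := mul_le_of_le_one_right (norm_nonneg _) he
  rw [sum_inner, map_sum] at hre
  rw [sum_sub_distrib]
  linarith

end

theorem stmt19_general {𝕜 : Type*} [RCLike 𝕜] {H : Type*} [NormedAddCommGroup H]
    [InnerProductSpace 𝕜 H] (n : ℕ) (e : H) (he : ‖e‖ = 1)
    (x : Fin n → H) (r : Fin n → ℝ)
    (h : ∀ i, ‖((‖x i‖ : 𝕜)⁻¹ • x i) - e‖ ≤ r i) :
    ∑ i, ‖x i‖ - ‖∑ i, x i‖ ≤ (1 / 2) * ∑ i, (r i) ^ 2 * ‖x i‖ := by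
  rw [mul_sum]
  calc ∑ i, ‖x i‖ - ‖∑ i, x i‖ ≤ ∑ i, (‖x i‖ - re ⟪x i, e⟫_𝕜) :=
        sum_norm_sub_norm_sum_le_sum_norm_sub_re_inner _ he.le x
    _ ≤ ∑ i, 1 / 2 * (r i ^ 2 * ‖x i‖) :=
        sum_le_sum fun i _ => norm_sub_re_inner_le_half_sq_mul_norm he (h i)

theorem stmt19 {𝕜 : Type*} [RCLike 𝕜] {H : Type*} [NormedAddCommGroup H]
    [InnerProductSpace 𝕜 H] (n : ℕ) (e : H) (he : ‖e‖ = 1)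
    (x : Fin n → H) (hx : ∀ i, x i ≠ 0) (r : Fin n → ℝ) (hr : ∀ i, 0 ≤ r i)
    (h : ∀ i, ‖((‖x i‖ : 𝕜)⁻¹ • x i) - e‖ ≤ r i) :
    ∑ i, ‖x i‖ - ‖∑ i, x i‖ ≤ (1 / 2) * ∑ i, (r i) ^ 2 * ‖x i‖ :=
  stmt19_general n e he x r h
end
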